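/- Plücker-type identity for Hankel columns: let c'_j = (s_j, …, s_{j+n-1})ᵀ ∈ K^n and c_j = (s_j, …, s_{j+n-2})ᵀ ∈ K^{n-1}. Define Δ_n = |c'_0 ⋯ c'_{n-1}|, Δ*_n = |c'_0 ⋯ c'_{n-2} c'_n|, Δ**_n = |c'_0 ⋯ c'_{n-3} c'_{n-1} c'_n|, Δ_{n-1} = |c_0 ⋯ c_{n-2}|, Δ*_{n-1} = |c_0 ⋯ c_{n-3} c_{n-1}|, Δ''_{n-1} = |c_0 ⋯ c_{n-3} c_n|. Then Δ**_n Δ_{n-1} − Δ*_n Δ*_{n-1} + Δ_n Δ''_{n-1} = 0. -/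

import Mathlib

/-!
For a linear form `φ` on `Kⁿ` and vectors `v₀, …, vₙ ∈ Kⁿ`, the `(n+1) × (n+1)` matrix with
columns `(φ vⱼ, vⱼ)` is singular, because its first row is a linear combination of the others.
Laplace expansion along that row gives `∑ⱼ (-1)ʲ φ(vⱼ) |v₀ ⋯ v̂ⱼ ⋯ vₙ| = 0`. Take `vⱼ = c'ⱼ` and
`φ w = |c₀ ⋯ c_{n-3} w̄|` with `w̄` the truncation of `w`: all but the last three terms vanish by a
repeated column, and those three are the identity.
-/

open Matrix

section Plucker

variable {K : Type*} [CommRing K]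

theorem Fin.val_succAbove {n : ℕ} (p : Fin (n + 1)) (l : Fin n) :
    (p.succAbove l : ℕ) = if (l : ℕ) < p then (l : ℕ) else l + 1 := by
  simp only [Fin.succAbove, Fin.lt_def, Fin.val_castSucc, apply_ite Fin.val, Fin.val_succ]

namespace LinearMap

theorem sum_neg_one_pow_mul_apply_mul_det_succAbove_eq_zero {n : ℕ}
    (φ : (Fin n → K) →ₗ[K] K) (v : Fin (n + 1) → Fin n → K) :
    ∑ j : Fin (n + 1), (-1) ^ (j : ℕ) * φ (v j) * (of fun i l => v (j.succAbove l) i).det = 0 := by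
  set N : Matrix (Fin (n + 1)) (Fin (n + 1)) K :=
    of (Fin.cons (fun j => φ (v j)) fun i j => v j i)
  have hrow : N 0 = ∑ i, (Fin.cons 0 fun i => φ fun j => if i = j then 1 else 0 :
      Fin (n + 1) → K) i • N i := by
    ext j
    simp [N, Fin.sum_univ_succ, φ.pi_apply_eq_sum_univ (v j), mul_comm]
  have hdet : N.det = 0 := by
    rw [← updateRow_eq_self N 0, hrow, det_updateRow_sum]
    simp
  rw [det_succ_row_zero] at hdet
  simpa [N, Matrix.submatrix] using hdet

theorem three_term_of_apply_castAdd_eq_zero {m : ℕ}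
    (φ : (Fin (m + 2) → K) →ₗ[K] K) (v : Fin (m + 3) → Fin (m + 2) → K)
    (hφ : ∀ j : Fin m, φ (v (Fin.castAdd 3 j)) = 0) :
    φ (v (Fin.natAdd m 0)) *
        (of fun i l => v ((Fin.natAdd m 0 : Fin (m + 3)).succAbove l) i).det
      - φ (v (Fin.natAdd m 1)) *
        (of fun i l => v ((Fin.natAdd m 1 : Fin (m + 3)).succAbove l) i).det
      + φ (v (Fin.natAdd m 2)) *
        (of fun i l => v ((Fin.natAdd m 2 : Fin (m + 3)).succAbove l) i).det = 0 := by
  have h := φ.sum_neg_one_pow_mul_apply_mul_det_succAbove_eq_zero v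
  rw [Fin.sum_univ_add (a := m) (b := 3), Fin.sum_univ_three] at h
  simp only [hφ, mul_zero, zero_mul, Finset.sum_const_zero, zero_add, Fin.val_natAdd,
    Fin.val_zero, Fin.val_one, Fin.val_two] at h
  refine neg_one_pow_mul_eq_zero_iff (n := m) |>.mp ?_
  linear_combination h

end LinearMap

section Hankel

variable (s : ℕ → K)

/-- `w ↦ |c₀ ⋯ c_{m-1} w̄|`, where `w̄` drops the last entry of `w`. -/
def hankelBorderedDet (m : ℕ) : (Fin (m + 2) → K) →ₗ[K] K :=
  LinearMap.proj (Fin.last m) ∘ₗ (of fun i l : Fin (m + 1) => s (i + l)).cramer ∘ₗ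
    LinearMap.funLeft K K Fin.castSucc

theorem hankelBorderedDet_apply (m : ℕ) (w : Fin (m + 2) → K) :
    hankelBorderedDet s m w =
      (of fun i l : Fin (m + 1) => if (l : ℕ) < m then s (i + l) else w i.castSucc).det := by
  simp only [hankelBorderedDet, LinearMap.comp_apply, LinearMap.proj_apply, cramer_apply]
  congr 1
  ext i l
  simp only [updateCol_apply, Fin.ext_iff, Fin.val_last, LinearMap.funLeft_apply, of_apply]
  split_ifs <;> first | rfl | omega

theorem hankelBorderedDet_eq_zero {m j : ℕ} (hj : j < m) :
    hankelBorderedDet s m (fun i => s (i + j)) = 0 := by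
  rw [hankelBorderedDet_apply]
  refine det_zero_of_column_eq (i := ⟨j, by omega⟩) (j := Fin.last m)
    (by simp only [ne_eq, Fin.ext_iff, Fin.val_last]; omega) fun i => ?_
  simp [hj]

theorem hankelBorderedDet_add (m d : ℕ) :
    hankelBorderedDet s m (fun i => s (i + (m + d))) =
      (of fun i l : Fin (m + 1) => s (i + if (l : ℕ) < m then (l : ℕ) else l + d)).det := by
  rw [hankelBorderedDet_apply]
  congr 1
  ext i l
  have hl := l.isLt
  simp only [of_apply, Fin.val_castSucc]
  split_ifs
  · rfl
  · congr 1; omega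

end Hankel

end Plucker

/-- Plücker-type identity for Hankel columns (appendix of the paper), for `n = m + 2`:
`Δ**ₙ Δ_{n-1} − Δ*ₙ Δ*_{n-1} + Δₙ Δ''_{n-1} = 0`, where determinants of size `n` use
columns `c'ⱼ = (s_j, …, s_{j+n-1})ᵀ` and those of size `n−1` use `cⱼ = (s_j, …, s_{j+n-2})ᵀ`:
`Δₙ = |c'₀ ⋯ c'_{n-1}|`, `Δ*ₙ = |c'₀ ⋯ c'_{n-2} c'ₙ|`, `Δ**ₙ = |c'₀ ⋯ c'_{n-3} c'_{n-1} c'ₙ|`,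
`Δ_{n-1} = |c₀ ⋯ c_{n-2}|`, `Δ*_{n-1} = |c₀ ⋯ c_{n-3} c_{n-1}|`, `Δ''_{n-1} = |c₀ ⋯ c_{n-3} cₙ|`. -/
theorem hankel_plucker {K : Type*} [CommRing K] (s : ℕ → K) (m : ℕ) :
    (Matrix.of fun i j : Fin (m + 2) =>
        s ((i : ℕ) + (if (j : ℕ) < m then (j : ℕ) else (j : ℕ) + 1))).det *
      (Matrix.of fun i j : Fin (m + 1) => s ((i : ℕ) + (j : ℕ))).det
    - (Matrix.of fun i j : Fin (m + 2) =>
        s ((i : ℕ) + (if (j : ℕ) < m + 1 then (j : ℕ) else (j : ℕ) + 1))).det *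
      (Matrix.of fun i j : Fin (m + 1) =>
        s ((i : ℕ) + (if (j : ℕ) < m then (j : ℕ) else (j : ℕ) + 1))).det
    + (Matrix.of fun i j : Fin (m + 2) => s ((i : ℕ) + (j : ℕ))).det *
      (Matrix.of fun i j : Fin (m + 1) =>
        s ((i : ℕ) + (if (j : ℕ) < m then (j : ℕ) else (j : ℕ) + 2))).det = 0 := by
  have h := (hankelBorderedDet s m).three_term_of_apply_castAdd_eq_zero (fun j i => s (i + j))
    fun j => hankelBorderedDet_eq_zero s j.isLt
  simp only [Fin.val_natAdd, Fin.val_zero, Fin.val_one, Fin.val_two, Fin.val_succAbove,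
    hankelBorderedDet_add] at h
  simp only [add_zero, ite_self, Fin.is_lt, if_true] at h
  linear_combination h
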